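/- arXiv:math/0610496 — 2 statements merged into one kernel-verified Lean document; each statement's English description precedes it below -/
import Mathlib

section
/- For any four distinct points a, b, c, d on the unit circle in counterclockwise order, if α = L([a,b]×[c,d]) and β = L([b,c]×[d,a]) denote the Liouville measures of the two complementary boxes, then e^{-α} + e^{-β} = 1. -/
open Complex

/-- Four points on the unit circle in counterclockwise order. -/
def CCW4 (a b c d : ℂ) : Prop :=
  ∃ α β γ δ : ℝ, a = Complex.exp (α * Complex.I) ∧ b = Complex.exp (β * Complex.I) ∧
    c = Complex.exp (γ * Complex.I) ∧ d = Complex.exp (δ * Complex.I) ∧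
    α < β ∧ β < γ ∧ γ < δ ∧ δ < α + 2 * Real.pi

/-- The Liouville measure of the box of geodesics `(a,b) × (c,d)`:
`L((a,b)×(c,d)) = log |((a-c)(b-d)) / ((a-d)(b-c))|`. -/
noncomputable def LBox (a b c d : ℂ) : ℝ :=
  Real.log ‖((a - c) * (b - d)) / ((a - d) * (b - c))‖

/-!
With `X = (a - d)(b - c)` and `Y = (a - b)(c - d)`, the identity `(a - c)(b - d) = X + Y` turns
the two exponentials into `‖X‖ / ‖X + Y‖` and `‖Y‖ / ‖X + Y‖`, so the claim is
`‖X + Y‖ = ‖X‖ + ‖Y‖`, i.e. `X` and `Y` lie on a common ray. On the unit circle the chord formula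
`e^{ix} - e^{iy} = 2i sin((x - y)/2) e^{i(x + y)/2}` makes `X` and `Y` real multiples of the same
unit complex number, and the cyclic order makes both coefficients negative.
-/

theorem Complex.exp_mul_I_sub_exp_mul_I (x y : ℂ) :
    exp (x * I) - exp (y * I) = 2 * I * sin ((x - y) / 2) * exp ((x + y) / 2 * I) := by
  have hx : x * I = (x - y) / 2 * I + (x + y) / 2 * I := by ring
  have hy : y * I = -((x - y) / 2 * I) + (x + y) / 2 * I := by ring
  rw [hx, hy, exp_add, exp_add, sin]
  ring_nf
  rw [I_sq]
  ring

theorem Complex.exp_mul_I_sub_mul_exp_mul_I_sub (p q r s : ℝ) :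
    (exp (p * I) - exp (s * I)) * (exp (q * I) - exp (r * I)) =
      (-4 * Real.sin ((p - s) / 2) * Real.sin ((q - r) / 2)) • exp ((p + q + r + s) / 2 * I) := by
  rw [exp_mul_I_sub_exp_mul_I, exp_mul_I_sub_exp_mul_I, real_smul]
  push_cast
  have hphase : exp ((p + q + r + s) / 2 * I) = exp ((p + s) / 2 * I) * exp ((q + r) / 2 * I) := by
    rw [← exp_add]; ring_nf
  rw [hphase]
  linear_combination
    (4 * sin ((p - s) / 2) * sin ((q - r) / 2) * exp ((p + s) / 2 * I) * exp ((q + r) / 2 * I)) *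
      I_sq

theorem Real.exp_neg_log_norm_div {𝕜 : Type*} [NormedDivisionRing 𝕜] {p q : 𝕜}
    (hp : p ≠ 0) (hq : q ≠ 0) : Real.exp (-Real.log ‖p / q‖) = ‖q‖ / ‖p‖ := by
  rw [Real.exp_neg, Real.exp_log (norm_pos_iff.mpr (div_ne_zero hp hq)), norm_div, inv_div]

theorem exp_neg_LBox_add_exp_neg_LBox_of_sameRay {a b c d : ℂ} (hX : (a - d) * (b - c) ≠ 0)
    (hY : (a - b) * (c - d) ≠ 0) (hXY : SameRay ℝ ((a - d) * (b - c)) ((a - b) * (c - d))) :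
    Real.exp (-LBox a b c d) + Real.exp (-LBox b c d a) = 1 := by
  set X := (a - d) * (b - c)
  set Y := (a - b) * (c - d)
  have hptolemy : (a - c) * (b - d) = X + Y := by ring
  have hnorm : ‖X + Y‖ = ‖X‖ + ‖Y‖ := hXY.norm_add
  have hsum : X + Y ≠ 0 := by
    rw [← norm_pos_iff, hnorm]; positivity
  have hL : LBox a b c d = Real.log ‖(X + Y) / X‖ := by rw [LBox, hptolemy]
  have hL' : LBox b c d a = Real.log ‖(X + Y) / Y‖ := by
    rw [LBox, show (b - d) * (c - a) = -(X + Y) by ring, show (b - a) * (c - d) = -Y by ring,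
      neg_div_neg_eq]
  rw [hL, hL', Real.exp_neg_log_norm_div hsum hX, Real.exp_neg_log_norm_div hsum hY, hnorm,
    ← add_div, div_self (by positivity)]

theorem CCW4.sameRay {a b c d : ℂ} (h : CCW4 a b c d) :
    (a - d) * (b - c) ≠ 0 ∧ (a - b) * (c - d) ≠ 0 ∧
      SameRay ℝ ((a - d) * (b - c)) ((a - b) * (c - d)) := by
  obtain ⟨α, β, γ, δ, rfl, rfl, rfl, rfl, hαβ, hβγ, hγδ, hδα⟩ := h
  have hsin {x y : ℝ} (hxy : x < y) (hyx : y < x + 2 * Real.pi) : Real.sin ((x - y) / 2) < 0 :=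
    Real.sin_neg_of_neg_of_neg_pi_lt (by linarith) (by linarith)
  have hcX : -4 * Real.sin ((α - δ) / 2) * Real.sin ((β - γ) / 2) < 0 := by
    nlinarith [mul_pos_of_neg_of_neg (hsin (by linarith) hδα) (hsin hβγ (by linarith))]
  have hcY : -4 * Real.sin ((α - β) / 2) * Real.sin ((γ - δ) / 2) < 0 := by
    nlinarith [mul_pos_of_neg_of_neg (hsin hαβ (by linarith)) (hsin hγδ (by linarith))]
  rw [exp_mul_I_sub_mul_exp_mul_I_sub, exp_mul_I_sub_mul_exp_mul_I_sub,
    show (α + γ + δ + β : ℂ) = α + β + γ + δ by ring]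
  have hu := exp_ne_zero ((α + β + γ + δ : ℂ) / 2 * I)
  exact ⟨smul_ne_zero hcX.ne hu, smul_ne_zero hcY.ne hu,
    sameRay_smul_smul_of_mul_nonneg (mul_pos_of_neg_of_neg hcX hcY).le⟩

/-- **The cross-ratio identity for the Liouville measure.**
For distinct points `a, b, c, d` on the unit circle in counterclockwise order, if
`α = L([a,b]×[c,d])` and `β = L([b,c]×[d,a])` are the Liouville measures of the two
complementary boxes, then `e^{-α} + e^{-β} = 1`. -/
theorem liouville_complementary_boxes (a b c d : ℂ) (h : CCW4 a b c d) :
    Real.exp (-(LBox a b c d)) + Real.exp (-(LBox b c d a)) = 1 := by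
  obtain ⟨hX, hY, hXY⟩ := h.sameRay
  exact exp_neg_LBox_add_exp_neg_LBox_of_sameRay hX hY hXY
end

section
/- If a homeomorphism h of the unit circle satisfies e^{-h_*L([a,b]×[c,d])} + e^{-h_*L([b,c]×[d,a])} = 1 for all quadruples a,b,c,d in counterclockwise order, fixes the three points 1, i, -1, and preserves the Liouville measure of every box (i.e. L(h(Q)) = L(Q) for all boxes Q), then h is the identity. -/
/-!
Put `x` in the first slot of a box by the symmetries of the cross-ratio. If `h` fixes the other
three corners `p, q, r`, preservation of `L` says that `‖h x - q‖ / ‖h x - r‖ = ‖x - q‖ / ‖x - r‖`;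
the box `(x, r, q, p)` gives the same for `p` in place of `r`. So the distances from `h x` to
`p, q, r` are a common multiple `t` of those from `x`. For `w, z, u` on the unit circle,
`‖w - u‖ = t ‖z - u‖` is a quadratic equation in `u`; holding for three distinct `u`, all its
coefficients vanish, which forces `t = 1` and `w = z`. Every `x` other than `1, i, -1` lies on one
of the three arcs between them, which provides the two boxes with corners `1, i, -1`.
-/

open Complex

theorem CCW4.rotate {a b c d : ℂ} (h : CCW4 a b c d) : CCW4 b c d a := by
  obtain ⟨α, β, γ, δ, ha, hb, hc, hd, hαβ, hβγ, hγδ, hδα⟩ := h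
  refine ⟨β, γ, δ, α + 2 * Real.pi, hb, hc, hd, ?_, hβγ, hγδ, hδα, by linarith⟩
  rw [ha]
  push_cast
  exact (Complex.exp_mul_I_periodic _).symm

theorem CCW4_cases_one_I_neg_one {x : ℂ} (hx : ‖x‖ = 1) (hx1 : x ≠ 1) (hxI : x ≠ I)
    (hxm1 : x ≠ -1) :
    CCW4 1 x I (-1) ∨ CCW4 1 I x (-1) ∨ CCW4 1 I (-1) x := by
  have hθ : x = exp (x.arg * I) := by
    simpa [hx] using (Complex.norm_mul_exp_arg_mul_I x).symm
  have h0 : (1 : ℂ) = exp ((0 : ℝ) * I) := by simp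
  have hI : I = exp ((Real.pi / 2 : ℝ) * I) := by simp
  have hm1 : (-1 : ℂ) = exp ((Real.pi : ℝ) * I) := by simp
  have hlo := Complex.neg_pi_lt_arg x
  have hhi := Complex.arg_le_pi x
  have hπ := Real.pi_pos
  rcases lt_trichotomy x.arg 0 with hneg | hzero | hpos
  · refine Or.inr (Or.inr ⟨0, Real.pi / 2, Real.pi, x.arg + 2 * Real.pi, h0, hI, hm1,
      hθ.trans ?_, by linarith, by linarith, by linarith, by linarith⟩)
    push_cast
    exact (Complex.exp_mul_I_periodic _).symm
  · exact absurd (hθ.trans (by rw [hzero]; simp)) hx1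
  rcases lt_trichotomy x.arg (Real.pi / 2) with hlt | heq | hgt
  · exact Or.inl ⟨0, x.arg, Real.pi / 2, Real.pi, h0, hθ, hI, hm1, hpos, hlt, by linarith,
      by linarith⟩
  · exact absurd (hθ.trans (by rw [heq]; simp)) hxI
  rcases hhi.lt_or_eq with hlt | heq
  · exact Or.inr (Or.inl ⟨0, Real.pi / 2, x.arg, Real.pi, h0, hI, hθ, hm1, by linarith, hgt, hlt,
      by linarith⟩)
  · exact absurd (hθ.trans (by rw [heq]; simp)) hxm1

theorem LBox_swap (a b c d : ℂ) : LBox a b c d = LBox b a d c := by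
  simp only [LBox, norm_div, norm_mul, norm_sub_rev a d, norm_sub_rev b c]
  ring_nf

theorem LBox_swap_pairs (a b c d : ℂ) : LBox a b c d = LBox c d a b := by
  simp only [LBox, norm_div, norm_mul, norm_sub_rev a c, norm_sub_rev b d, norm_sub_rev a d,
    norm_sub_rev b c]
  ring_nf

theorem norm_sub_mul_eq_of_LBox_eq {x y b c d : ℂ} (hxc : x ≠ c) (hxd : x ≠ d) (hyc : y ≠ c)
    (hyd : y ≠ d) (hbc : b ≠ c) (hbd : b ≠ d) (h : LBox y b c d = LBox x b c d) :
    ‖y - c‖ * ‖x - d‖ = ‖x - c‖ * ‖y - d‖ := by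
  have hpos : ∀ z, z ≠ c → z ≠ d → 0 < ‖(z - c) * (b - d) / ((z - d) * (b - c))‖ :=
    fun z hzc hzd => norm_pos_iff.2 <| by simp [sub_eq_zero, hzc, hzd, hbc, hbd]
  have hnorm := Real.log_injOn_pos (hpos y hyc hyd) (hpos x hxc hxd) h
  have hne : ∀ u v : ℂ, u ≠ v → ‖u - v‖ ≠ 0 := fun u v huv => by simpa [sub_eq_zero] using huv
  simp only [norm_div, norm_mul] at hnorm
  rw [div_eq_div_iff (mul_ne_zero (hne _ _ hyd) (hne _ _ hbc))
    (mul_ne_zero (hne _ _ hxd) (hne _ _ hbc))] at hnorm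
  exact mul_right_cancel₀ (mul_ne_zero (hne _ _ hbd) (hne _ _ hbc)) (by linear_combination hnorm)

theorem quadratic_coeffs_eq_zero {K : Type*} [Field K] {A B C p q r : K} (hpq : p ≠ q)
    (hpr : p ≠ r) (hqr : q ≠ r) (hp : A * p ^ 2 + B * p + C = 0) (hq : A * q ^ 2 + B * q + C = 0)
    (hr : A * r ^ 2 + B * r + C = 0) : A = 0 ∧ B = 0 ∧ C = 0 := by
  have hpq' : A * (p + q) + B = 0 :=
    mul_left_cancel₀ (sub_ne_zero.2 hpq) (by linear_combination hp - hq)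
  have hpr' : A * (p + r) + B = 0 :=
    mul_left_cancel₀ (sub_ne_zero.2 hpr) (by linear_combination hp - hr)
  have hA : A = 0 :=
    (mul_eq_zero.1 (by linear_combination hpq' - hpr' : A * (q - r) = 0)).resolve_right
      (sub_ne_zero.2 hqr)
  have hB : B = 0 := by simpa [hA] using hpq'
  exact ⟨hA, hB, by simpa [hA, hB] using hp⟩

open ComplexConjugate in
theorem eq_of_norm_sub_eq_mul_norm_sub {p q r z w : ℂ} {t : ℝ} (hp : ‖p‖ = 1) (hq : ‖q‖ = 1)
    (hr : ‖r‖ = 1) (hz : ‖z‖ = 1) (hw : ‖w‖ = 1) (hpq : p ≠ q) (hpr : p ≠ r) (hqr : q ≠ r)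
    (htp : ‖w - p‖ = t * ‖z - p‖) (htq : ‖w - q‖ = t * ‖z - q‖) (htr : ‖w - r‖ = t * ‖z - r‖) :
    w = z := by
  have mul_conj_eq_one : ∀ u : ℂ, ‖u‖ = 1 → u * conj u = 1 := fun u hu => by
    rw [Complex.mul_conj, Complex.normSq_eq_norm_sq, hu]; norm_num
  have quad : ∀ u : ℂ, ‖u‖ = 1 → ‖w - u‖ = t * ‖z - u‖ →
      (t ^ 2 * conj z - conj w) * u ^ 2 + 2 * (1 - t ^ 2) * u + (t ^ 2 * z - w) = 0 := by
    intro u hu htu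
    -- `‖w - u‖² = 2 - w ū - w̄ u` on the circle; multiplied by `u` this is quadratic in `u`.
    have hsq : (w - u) * conj (w - u) = t ^ 2 * ((z - u) * conj (z - u)) := by
      simp only [Complex.mul_conj, Complex.normSq_eq_norm_sq, htu]; push_cast; ring
    rw [map_sub, map_sub] at hsq
    linear_combination u * hsq - u * mul_conj_eq_one w hw + (w - u) * mul_conj_eq_one u hu +
      t ^ 2 * (u * mul_conj_eq_one z hz - z * mul_conj_eq_one u hu + u * mul_conj_eq_one u hu)
  obtain ⟨-, hB, hC⟩ := quadratic_coeffs_eq_zero hpq hpr hqr (quad p hp htp) (quad q hq htq)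
    (quad r hr htr)
  have ht : (t : ℂ) ^ 2 = 1 := by linear_combination -hB / 2
  linear_combination -hC + z * ht

theorem eq_of_LBox_eq {p q r x y : ℂ} (hp : ‖p‖ = 1) (hq : ‖q‖ = 1) (hr : ‖r‖ = 1)
    (hx : ‖x‖ = 1) (hy : ‖y‖ = 1) (hpq : p ≠ q) (hpr : p ≠ r) (hqr : q ≠ r)
    (hxpqr : x ∉ ({p, q, r} : Set ℂ)) (hypqr : y ∉ ({p, q, r} : Set ℂ))
    (h₁ : LBox y p q r = LBox x p q r) (h₂ : LBox y r q p = LBox x r q p) : y = x := by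
  simp only [Set.mem_insert_iff, Set.mem_singleton_iff, not_or] at hxpqr hypqr
  obtain ⟨hxp, hxq, hxr⟩ := hxpqr
  obtain ⟨hyp, hyq, hyr⟩ := hypqr
  have hr' := norm_sub_mul_eq_of_LBox_eq hxq hxr hyq hyr hpq hpr h₁
  have hp' := norm_sub_mul_eq_of_LBox_eq hxq hxp hyq hyp hqr.symm hpr.symm h₂
  have hxq' : ‖x - q‖ ≠ 0 := by simpa [sub_eq_zero] using hxq
  refine eq_of_norm_sub_eq_mul_norm_sub (t := ‖y - q‖ / ‖x - q‖) hp hq hr hx hy hpq hpr hqr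
    ?_ ?_ ?_ <;> field_simp
  · linear_combination -hp'
  · linear_combination -hr'

theorem liouville_preserving_homeo_is_id_general (h : ℂ → ℂ)
    (hbij : Set.BijOn h (Metric.sphere 0 1) (Metric.sphere 0 1))
    (hfix : h 1 = 1 ∧ h Complex.I = Complex.I ∧ h (-1) = -1)
    (hpres : ∀ a b c d : ℂ, CCW4 a b c d →
      LBox (h a) (h b) (h c) (h d) = LBox a b c d) :
    ∀ x : ℂ, ‖x‖ = 1 → h x = x := by
  obtain ⟨hf1, hfI, hfm1⟩ := hfix
  intro x hx
  have hsphere : ∀ z : ℂ, ‖z‖ = 1 → z ∈ Metric.sphere (0 : ℂ) 1 := by simp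
  have hhx : ‖h x‖ = 1 := by simpa using hbij.mapsTo (hsphere x hx)
  have hne : ∀ u, ‖u‖ = 1 → h u = u → x ≠ u → h x ≠ u := fun u hu hfu hxu e =>
    hxu (hbij.injOn (hsphere x hx) (hsphere u hu) (e.trans hfu.symm))
  by_cases hx1 : x = 1; · rw [hx1, hf1]
  by_cases hxI : x = I; · rw [hxI, hfI]
  by_cases hxm1 : x = -1; · rw [hxm1, hfm1]
  have hy1 := hne 1 (by simp) hf1 hx1
  have hyI := hne I (by simp) hfI hxI
  have hym1 := hne (-1) (by simp) hfm1 hxm1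
  have h1I : (1 : ℂ) ≠ I := by simp [Complex.ext_iff]
  have h1m1 : (1 : ℂ) ≠ -1 := by norm_num
  have hIm1 : I ≠ -1 := by simp [Complex.ext_iff]
  -- In each case the box and its rotation, with `x` moved to the first slot by the symmetries of
  -- `LBox`, read `(x, p, q, r)` and `(x, r, q, p)`.
  rcases CCW4_cases_one_I_neg_one hx hx1 hxI hxm1 with hccw | hccw | hccw
  · have E₁ := hpres _ _ _ _ hccw
    have E₂ := hpres _ _ _ _ hccw.rotate
    simp only [hf1, hfI, hfm1, LBox_swap 1] at E₁ E₂
    exact eq_of_LBox_eq (by simp) (by simp) (by simp) hx hhx h1m1 h1I hIm1.symm (by simp [*])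
      (by simp [*]) E₁ E₂
  · have E₁ := hpres _ _ _ _ hccw
    have E₂ := hpres _ _ _ _ hccw.rotate
    simp only [hf1, hfI, hfm1, LBox_swap_pairs 1 I, LBox_swap I] at E₁ E₂
    exact eq_of_LBox_eq (by simp) (by simp) (by simp) hx hhx h1m1.symm hIm1.symm h1I (by simp [*])
      (by simp [*]) E₁ E₂
  · have E₁ := hpres _ _ _ _ hccw
    have E₂ := hpres _ _ _ _ hccw.rotate
    simp only [hf1, hfI, hfm1, LBox_swap_pairs 1 I, LBox_swap (-1), LBox_swap_pairs I (-1)]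
      at E₁ E₂
    exact eq_of_LBox_eq (by simp) (by simp) (by simp) hx hhx hIm1.symm h1m1.symm h1I.symm
      (by simp [*]) (by simp [*]) E₁ E₂

/-- **A circle homeomorphism preserving the Liouville measure and fixing three points
is the identity.**  If a homeomorphism `h` of the unit circle satisfies the normalization
`e^{-h_*L([a,b]×[c,d])} + e^{-h_*L([b,c]×[d,a])} = 1` for all quadruples `a,b,c,d` in
counterclockwise order, fixes the three points `1, i, -1`, and preserves the Liouville
measure of every box (`L(h(Q)) = L(Q)` for all boxes `Q`), then `h` is the identity on
the circle. -/
theorem liouville_preserving_homeo_is_id (h : ℂ → ℂ)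
    (hbij : Set.BijOn h (Metric.sphere 0 1) (Metric.sphere 0 1))
    (hcont : ContinuousOn h (Metric.sphere 0 1))
    (hnormalize : ∀ a b c d : ℂ, CCW4 a b c d →
      Real.exp (-(LBox (h a) (h b) (h c) (h d))) +
        Real.exp (-(LBox (h b) (h c) (h d) (h a))) = 1)
    (hfix : h 1 = 1 ∧ h Complex.I = Complex.I ∧ h (-1) = -1)
    (hpres : ∀ a b c d : ℂ, CCW4 a b c d →
      LBox (h a) (h b) (h c) (h d) = LBox a b c d) :
    ∀ x : ℂ, ‖x‖ = 1 → h x = x :=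
  liouville_preserving_homeo_is_id_general h hbij hfix hpres
end
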